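/- arXiv:2601.22474 — 2 statements merged into one kernel-verified Lean document; each statement's English description precedes it below -/
import Mathlib

section
/- Let V be a finite set, π_ref and π_prop strictly positive probability mass functions on V, ε > 0, and τ > 0 such that π*(a) := min((1+ε)·π_prop(a), τ·π_ref(a)) defines a probability mass function (sums to 1). Let h(a) = π_prop(a)/π_ref(a) and suppose u : V → ℝ is comonotone with h, i.e. (u(a)-u(b))(h(a)-h(b)) ≥ 0 for all a,b. Then Σ_a π*(a) u(a) ≥ Σ_a π_ref(a) u(a). -/
theorem stmt_7 {V : Type*} [Fintype V] (πref πprop u : V → ℝ) (ε τ : ℝ)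
    (href : ∀ a, 0 < πref a) (hrefs : ∑ a, πref a = 1)
    (hprop : ∀ a, 0 < πprop a) (hprops : ∑ a, πprop a = 1)
    (hε : 0 < ε) (hτ : 0 < τ)
    (hnorm : ∑ a, min ((1 + ε) * πprop a) (τ * πref a) = 1)
    (hcom : ∀ a b,
      (u a - u b) * (πprop a / πref a - πprop b / πref b) ≥ 0) :
    ∑ a, min ((1 + ε) * πprop a) (τ * πref a) * u a ≥ ∑ a, πref a * u a := by
  set g : V → ℝ := fun a => min ((1 + ε) * πprop a) (τ * πref a) / πref a with hg
  have fact1 : ∀ a, πref a * g a = min ((1 + ε) * πprop a) (τ * πref a) := by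
    intro a
    show πref a * (min ((1 + ε) * πprop a) (τ * πref a) / πref a) = _
    rw [← mul_div_assoc]
    exact mul_div_cancel_left₀ _ (href a).ne'
  have gform : ∀ a, g a = min ((1 + ε) * (πprop a / πref a)) τ := by
    intro a
    show min ((1 + ε) * πprop a) (τ * πref a) / πref a = _
    rw [← min_div_div_right (href a).le]
    congr 1
    · rw [mul_div_assoc]
    · exact mul_div_cancel_right₀ _ (href a).ne'
  have mono : ∀ a b, πprop a / πref a ≤ πprop b / πref b → g a ≤ g b := by
    intro a b hab
    rw [gform a, gform b]
    exact min_le_min (by nlinarith) le_rfl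
  have geq : ∀ a b, πprop a / πref a = πprop b / πref b → g a = g b := by
    intro a b hab
    exact le_antisymm (mono a b hab.le) (mono b a hab.ge)
  have key : ∀ a b, 0 ≤ (u a - u b) * (g a - g b) := by
    intro a b
    rcases lt_trichotomy (πprop a / πref a) (πprop b / πref b) with hlt | heq | hgt
    · have hu : u a ≤ u b := by nlinarith [hcom a b]
      have hgab := mono a b hlt.le
      nlinarith
    · rw [geq a b heq, sub_self, mul_zero]
    · have hu : u b ≤ u a := by nlinarith [hcom a b]
      have hgab := mono b a hgt.le
      nlinarith
  have nonneg : 0 ≤ ∑ a, ∑ b, πref a * πref b * ((u a - u b) * (g a - g b)) :=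
    Finset.sum_nonneg fun a _ => Finset.sum_nonneg fun b _ =>
      mul_nonneg (mul_nonneg (href a).le (href b).le) (key a b)
  have expand : ∑ a, ∑ b, πref a * πref b * ((u a - u b) * (g a - g b))
      = 2 * ((∑ a, πref a * (u a * g a)) * (∑ a, πref a))
        - 2 * ((∑ a, πref a * u a) * (∑ a, πref a * g a)) := by
    have hterm : ∀ a b : V, πref a * πref b * ((u a - u b) * (g a - g b))
        = (πref a * (u a * g a)) * πref b + πref a * (πref b * (u b * g b))
          - ((πref a * u a) * (πref b * g b) + (πref a * g a) * (πref b * u b)) := by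
      intro a b; ring
    simp only [hterm, Finset.sum_sub_distrib, Finset.sum_add_distrib, ← Finset.sum_mul,
      ← Finset.mul_sum]
    ring
  have hC : ∑ a, πref a * g a = 1 := by
    rw [← hnorm]
    exact Finset.sum_congr rfl fun a _ => fact1 a
  have hA : ∑ a, min ((1 + ε) * πprop a) (τ * πref a) * u a
      = ∑ a, πref a * (u a * g a) := by
    refine Finset.sum_congr rfl fun a _ => ?_
    rw [← fact1 a]; ring
  rw [hA]
  rw [expand, hrefs, hC] at nonneg
  linarith
end

section
/- Continuous improvement theorem: let ν be a σ-finite measure on Y, π_ref a strictly positive probability density w.r.t. ν, π_prop a probability density, ε > 0, and τ > 0 such that π*(y) = min((1+ε)π_prop(y), τ·π_ref(y)) integrates to 1. Let h = π_prop/π_ref and suppose u : Y → ℝ is bounded measurable and comonotone with h ν-a.e., i.e. (u(y)-u(y'))(h(y)-h(y')) ≥ 0 for a.e. (y,y'). Then ∫ π*(y)·u(y) dν(y) ≥ ∫ π_ref(y)·u(y) dν(y). -/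
/-!
Put `g := π* - π_ref`, so that `∫ g = 0` and `∫ π_ref = 1`. Expanding the product integral gives
`∬ (u y - u y') (g y π_ref y' - g y' π_ref y) = 2 ∫ u g`. Since `g = π_ref · φ ∘ h` with
`φ t = min ((1 + ε) t) τ - 1` monotone, the integrand equals
`π_ref y π_ref y' (u y - u y') (φ (h y) - φ (h y'))`, which is nonnegative by comonotonicity.
-/

open MeasureTheory

theorem Monotone.sub_mul_sub_nonneg_of_sub_mul_sub_nonneg {φ : ℝ → ℝ} (hφ : Monotone φ)
    {a b s t : ℝ} (h : 0 ≤ (a - b) * (s - t)) : 0 ≤ (a - b) * (φ s - φ t) := by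
  rcases lt_trichotomy s t with hst | rfl | hts
  · have hab : a - b ≤ 0 := nonpos_of_mul_nonneg_left h (sub_neg.mpr hst)
    exact mul_nonneg_of_nonpos_of_nonpos hab (sub_nonpos.mpr (hφ hst.le))
  · simp
  · have hab : 0 ≤ a - b := nonneg_of_mul_nonneg_left h (sub_pos.mpr hts)
    exact mul_nonneg hab (sub_nonneg.mpr (hφ hts.le))

theorem Monotone.sub_mul_sub_mul_comp_nonneg {φ : ℝ → ℝ} (hφ : Monotone φ) {a b r s x y : ℝ}
    (hr : 0 ≤ r) (hs : 0 ≤ s) (h : 0 ≤ (a - b) * (x - y)) :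
    0 ≤ (a - b) * (r * φ x * s - s * φ y * r) := by
  calc 0 ≤ r * s * ((a - b) * (φ x - φ y)) :=
        mul_nonneg (mul_nonneg hr hs) (hφ.sub_mul_sub_nonneg_of_sub_mul_sub_nonneg h)
    _ = (a - b) * (r * φ x * s - s * φ y * r) := by ring

-- At `r = 0` both sides vanish, the right one because `p / 0 = 0`.
theorem min_mul_eq_mul_min_mul_div {k p r τ : ℝ} (hkp : 0 ≤ k * p) (hr : 0 ≤ r) :
    min (k * p) (τ * r) = r * min (k * (p / r)) τ := by
  rcases hr.eq_or_lt with rfl | hr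
  · simp [hkp]
  · rw [mul_min_of_nonneg _ _ hr.le, ← mul_div_assoc, mul_div_cancel₀ _ hr.ne', mul_comm r τ]

section ProductIntegral

variable {α : Type*} [MeasurableSpace α] {μ : Measure α} [SFinite μ] {u g r : α → ℝ}

theorem integral_prod_sub_mul_sub_mul (hg : Integrable g μ) (hr : Integrable r μ)
    (hug : Integrable (fun y => u y * g y) μ) (hur : Integrable (fun y => u y * r y) μ) :
    ∫ z, (u z.1 - u z.2) * (g z.1 * r z.2 - g z.2 * r z.1) ∂μ.prod μ
      = 2 * ((∫ y, u y * g y ∂μ) * (∫ y, r y ∂μ) - (∫ y, u y * r y ∂μ) * ∫ y, g y ∂μ) := by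
  have hexpand : (fun z : α × α => (u z.1 - u z.2) * (g z.1 * r z.2 - g z.2 * r z.1))
      = fun z => (u z.1 * g z.1 * r z.2 + r z.1 * (u z.2 * g z.2))
          - (u z.1 * r z.1 * g z.2 + g z.1 * (u z.2 * r z.2)) := by
    funext z; ring
  have hpos : Integrable (fun z : α × α => u z.1 * g z.1 * r z.2 + r z.1 * (u z.2 * g z.2))
      (μ.prod μ) := (hug.mul_prod hr).add (hr.mul_prod hug)
  have hneg : Integrable (fun z : α × α => u z.1 * r z.1 * g z.2 + g z.1 * (u z.2 * r z.2))
      (μ.prod μ) := (hur.mul_prod hg).add (hg.mul_prod hur)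
  rw [hexpand, integral_sub hpos hneg, integral_add (hug.mul_prod hr) (hr.mul_prod hug),
    integral_add (hur.mul_prod hg) (hg.mul_prod hur),
    integral_prod_mul (fun y => u y * g y) r, integral_prod_mul r (fun y => u y * g y),
    integral_prod_mul (fun y => u y * r y) g, integral_prod_mul g (fun y => u y * r y)]
  ring

theorem integral_mul_nonneg_of_ae_prod_nonneg (hg : Integrable g μ) (hr : Integrable r μ)
    (hug : Integrable (fun y => u y * g y) μ) (hur : Integrable (fun y => u y * r y) μ)
    (hr_pos : 0 < ∫ y, r y ∂μ) (hg_zero : ∫ y, g y ∂μ = 0)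
    (hnonneg : ∀ᵐ z ∂μ.prod μ, 0 ≤ (u z.1 - u z.2) * (g z.1 * r z.2 - g z.2 * r z.1)) :
    0 ≤ ∫ y, u y * g y ∂μ := by
  have h := integral_nonneg_of_ae hnonneg
  rw [integral_prod_sub_mul_sub_mul hg hr hug hur, hg_zero, mul_zero, sub_zero] at h
  exact nonneg_of_mul_nonneg_left (nonneg_of_mul_nonneg_right h two_pos) hr_pos

end ProductIntegral

theorem stmt_19_general {Y : Type*} [MeasurableSpace Y] (ν : Measure Y) [SigmaFinite ν]
    (πref πprop u : Y → ℝ) (ε τ : ℝ)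
    (hum : Measurable u)
    (href : ∀ y, 0 ≤ πref y)
    (hprop : ∀ y, 0 ≤ πprop y)
    (hrefi : Integrable πref ν) (hpropi : Integrable πprop ν)
    (hrefs : ∫ y, πref y ∂ν = 1)
    (hε : 0 < ε)
    (hnorm : ∫ y, min ((1 + ε) * πprop y) (τ * πref y) ∂ν = 1)
    (hub : ∃ C : ℝ, ∀ y, |u y| ≤ C)
    (hcom : ∀ᵐ z ∂(ν.prod ν),
      (u z.1 - u z.2) * (πprop z.1 / πref z.1 - πprop z.2 / πref z.2) ≥ 0) :
    ∫ y, min ((1 + ε) * πprop y) (τ * πref y) * u y ∂ν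
      ≥ ∫ y, πref y * u y ∂ν := by
  obtain ⟨C, hC⟩ := hub
  set πstar : Y → ℝ := fun y => min ((1 + ε) * πprop y) (τ * πref y)
  set φ : ℝ → ℝ := fun t => min ((1 + ε) * t) τ - 1 with hφ_def
  have hφ : Monotone φ := fun s t hst => by
    simp only [hφ_def]; gcongr
  have hg_eq : ∀ y, πstar y - πref y = πref y * φ (πprop y / πref y) := fun y => by
    show min ((1 + ε) * πprop y) (τ * πref y) - πref y
      = πref y * (min ((1 + ε) * (πprop y / πref y)) τ - 1)
    rw [min_mul_eq_mul_min_mul_div (mul_nonneg (by linarith) (hprop y)) (href y)]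
    ring
  have hstari : Integrable πstar ν := (hpropi.const_mul _).inf (hrefi.const_mul _)
  have hgi : Integrable (fun y => πstar y - πref y) ν := hstari.sub hrefi
  have hu_bdd : ∀ᵐ y ∂ν, ‖u y‖ ≤ C := ae_of_all _ hC
  have hugi := hgi.bdd_mul hum.aestronglyMeasurable hu_bdd
  have huri := hrefi.bdd_mul hum.aestronglyMeasurable hu_bdd
  have hg_zero : ∫ y, πstar y - πref y ∂ν = 0 := by
    rw [integral_sub hstari hrefi, hnorm, hrefs, sub_self]
  have hI := integral_mul_nonneg_of_ae_prod_nonneg hgi hrefi hugi huri (hrefs ▸ one_pos)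
    hg_zero <| hcom.mono fun z hz => by
      rw [hg_eq, hg_eq]
      exact hφ.sub_mul_sub_mul_comp_nonneg (href _) (href _) hz
  have hsplit : ∫ y, πstar y * u y ∂ν
      = ∫ y, πref y * u y ∂ν + ∫ y, u y * (πstar y - πref y) ∂ν := by
    rw [← integral_add (huri.congr (ae_of_all _ fun y => mul_comm _ _)) hugi]
    congr 1; funext y; ring
  rw [ge_iff_le, hsplit]
  exact le_add_of_nonneg_right hI

theorem stmt_19 {Y : Type*} [MeasurableSpace Y] (ν : Measure Y) [SigmaFinite ν]
    (πref πprop u : Y → ℝ) (ε τ : ℝ)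
    (hrefm : Measurable πref) (hpropm : Measurable πprop) (hum : Measurable u)
    (href0 : ∀ᵐ y ∂ν, 0 < πref y) (href : ∀ y, 0 ≤ πref y)
    (hprop : ∀ y, 0 ≤ πprop y)
    (hrefi : Integrable πref ν) (hpropi : Integrable πprop ν)
    (hrefs : ∫ y, πref y ∂ν = 1) (hprops : ∫ y, πprop y ∂ν = 1)
    (hε : 0 < ε) (hτ : 0 < τ)
    (hnorm : ∫ y, min ((1 + ε) * πprop y) (τ * πref y) ∂ν = 1)
    (hub : ∃ C : ℝ, ∀ y, |u y| ≤ C)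
    (hcom : ∀ᵐ z ∂(ν.prod ν),
      (u z.1 - u z.2) * (πprop z.1 / πref z.1 - πprop z.2 / πref z.2) ≥ 0) :
    ∫ y, min ((1 + ε) * πprop y) (τ * πref y) * u y ∂ν
      ≥ ∫ y, πref y * u y ∂ν :=
  stmt_19_general ν πref πprop u ε τ hum href hprop hrefi hpropi hrefs hε hnorm hub hcom
end
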